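/- The sixteen operators of form E = P⊗I⊗I⊗I⊗I, I⊗P⊗I⊗I⊗I, etc., with P ∈ {X, X²} (single bit-shift errors on any of 5 qutrits) together with the identity yield pairwise distinct syndrome vectors under the stabilizers S₃ and S₄ combined with S₁, S₂: specifically, for single-qutrit errors Xᵃ on qutrit k (a ∈ {1,2}, k ∈ {1,…,5}), the commutation phases (ε₁,ε₂,ε₃,ε₄) ∈ {1,ω,ω²}⁴ defined by SⱼE = εⱼ·E·Sⱼ are distinct for distinct (a,k), and all differ from (1,1,1,1). -/

import Mathlib

open Matrix Kronecker

noncomputable def ω : ℂ := Complex.exp (2 * Real.pi * Complex.I / 3)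

noncomputable def X : Matrix (Fin 3) (Fin 3) ℂ := !![0,0,1; 1,0,0; 0,1,0]
noncomputable def Z : Matrix (Fin 3) (Fin 3) ℂ := !![1,0,0; 0,ω,0; 0,0,ω^2]
noncomputable def Id3 : Matrix (Fin 3) (Fin 3) ℂ := 1

noncomputable def S : Fin 4 → Matrix ((((Fin 3 × Fin 3) × Fin 3) × Fin 3) × Fin 3)
    ((((Fin 3 × Fin 3) × Fin 3) × Fin 3) × Fin 3) ℂ
  | 0 => Id3 ⊗ₖ X ⊗ₖ Z ⊗ₖ Z ⊗ₖ X
  | 1 => X ⊗ₖ Id3 ⊗ₖ X ⊗ₖ Z ⊗ₖ Z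
  | 2 => Z ⊗ₖ X ⊗ₖ Id3 ⊗ₖ X ⊗ₖ Z
  | 3 => Z ⊗ₖ Z ⊗ₖ X ⊗ₖ Id3 ⊗ₖ X

/-- The error `X^(a+1)` acting on qutrit `k` of the 5-qutrit system. -/
noncomputable def E (a : Fin 2) (k : Fin 5) :
    Matrix ((((Fin 3 × Fin 3) × Fin 3) × Fin 3) × Fin 3)
      ((((Fin 3 × Fin 3) × Fin 3) × Fin 3) × Fin 3) ℂ :=
  let P := X ^ ((a : ℕ) + 1)
  match k with
  | 0 => P ⊗ₖ Id3 ⊗ₖ Id3 ⊗ₖ Id3 ⊗ₖ Id3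
  | 1 => Id3 ⊗ₖ P ⊗ₖ Id3 ⊗ₖ Id3 ⊗ₖ Id3
  | 2 => Id3 ⊗ₖ Id3 ⊗ₖ P ⊗ₖ Id3 ⊗ₖ Id3
  | 3 => Id3 ⊗ₖ Id3 ⊗ₖ Id3 ⊗ₖ P ⊗ₖ Id3
  | 4 => Id3 ⊗ₖ Id3 ⊗ₖ Id3 ⊗ₖ Id3 ⊗ₖ P

/-!
Since `Z X = ω X Z`, the only tensor factor of `Sⱼ` that fails to commute with `Xᵐ` on qutrit `k`
is a `Z` there, so the syndrome of that error is `ω ^ (m zⱼₖ)`, where `zⱼₖ ∈ {0, 1}` records whether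
`Sⱼ` has a `Z` on qutrit `k`. The five columns of `z` are distinct and nonzero, and since they are
`0/1` vectors, no column is congruent to twice another modulo 3.
-/

theorem IsPrimitiveRoot.pow_eq_pow_iff_modEq {M : Type*} [CommMonoid M] {ζ : M} {k : ℕ}
    (h : IsPrimitiveRoot ζ k) (hk : k ≠ 0) {n m : ℕ} : ζ ^ n = ζ ^ m ↔ n ≡ m [MOD k] := by
  rw [(h.isOfFinOrder hk).pow_eq_pow_iff_modEq, ← h.eq_orderOf]

lemma isPrimitiveRoot_ω : IsPrimitiveRoot ω 3 := by
  simpa [ω] using Complex.isPrimitiveRoot_exp 3 (by norm_num)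

lemma ω_pow_eq_ω_pow_iff {n m : ℕ} : ω ^ n = ω ^ m ↔ n ≡ m [MOD 3] :=
  isPrimitiveRoot_ω.pow_eq_pow_iff_modEq three_ne_zero

namespace Matrix

variable {ι κ R : Type*} [Fintype ι] [Fintype κ] [CommSemiring R]

def PhaseCommute (q : R) (A B : Matrix ι ι R) : Prop := A * B = q • (B * A)

lemma PhaseCommute.congr_phase {q q' : R} {A B : Matrix ι ι R} (h : PhaseCommute q A B)
    (hq : q = q') : PhaseCommute q' A B :=
  hq ▸ h

lemma _root_.Commute.phaseCommute_one {A B : Matrix ι ι R} (h : Commute A B) :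
    PhaseCommute 1 A B := by
  rw [PhaseCommute, one_smul, h.eq]

lemma PhaseCommute.pow_right [DecidableEq ι] {q : R} {A B : Matrix ι ι R}
    (h : PhaseCommute q A B) (m : ℕ) : PhaseCommute (q ^ m) A (B ^ m) := by
  induction m with
  | zero => simp [PhaseCommute]
  | succ m ih =>
    calc A * B ^ (m + 1) = A * B ^ m * B := by rw [pow_succ, Matrix.mul_assoc]
      _ = q ^ m • (B ^ m * (A * B)) := by rw [ih, Matrix.smul_mul, Matrix.mul_assoc]
      _ = q ^ (m + 1) • (B ^ (m + 1) * A) := by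
        rw [h, Matrix.mul_smul, smul_smul, ← pow_succ, ← Matrix.mul_assoc, ← pow_succ]

lemma PhaseCommute.kronecker {q r : R} {A C : Matrix ι ι R} {B D : Matrix κ κ R}
    (h₁ : PhaseCommute q A C) (h₂ : PhaseCommute r B D) :
    PhaseCommute (q * r) (A ⊗ₖ B) (C ⊗ₖ D) := by
  rw [PhaseCommute, ← mul_kronecker_mul, ← mul_kronecker_mul, h₁, h₂, smul_kronecker,
    kronecker_smul, smul_smul]

end Matrix

lemma phaseCommute_Z_X : PhaseCommute ω Z X := by
  have hω : ω * ω ^ 2 = 1 := by linear_combination isPrimitiveRoot_ω.pow_eq_one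
  rw [PhaseCommute, X, Z, mul_fin_three, mul_fin_three]
  simp only [smul_of, smul_cons, smul_empty, smul_eq_mul]
  norm_num [hω, ← sq]

/-- `zExponent j k` is the power of `Z` in the `k`-th tensor factor of `S j`. -/
def zExponent : Fin 4 → Fin 5 → ℕ
  | 0 => ![0, 0, 1, 1, 0]
  | 1 => ![0, 0, 0, 1, 1]
  | 2 => ![1, 0, 0, 0, 1]
  | 3 => ![1, 1, 0, 0, 0]

lemma phaseCommute_S_E (a : Fin 2) (k : Fin 5) (j : Fin 4) :
    PhaseCommute (ω ^ (zExponent j k * (a + 1))) (S j) (E a k) := by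
  have hI : ∀ A, PhaseCommute 1 Id3 A := fun A => (Commute.one_left A).phaseCommute_one
  have hI' : ∀ A, PhaseCommute 1 A Id3 := fun A => (Commute.one_right A).phaseCommute_one
  have hX : ∀ m : ℕ, PhaseCommute 1 X (X ^ m) := fun m => (Commute.self_pow X m).phaseCommute_one
  have hZ : ∀ m : ℕ, PhaseCommute (ω ^ m) Z (X ^ m) := phaseCommute_Z_X.pow_right
  fin_cases j <;> fin_cases k <;>
  · simp only [S, E]
    apply PhaseCommute.congr_phase (.kronecker (.kronecker (.kronecker (.kronecker ?_ ?_) ?_) ?_) ?_)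
    -- matching up to reducible unfolding only: unifying `Id3` with `X ^ (a + 1)` is very slow
    all_goals try with_reducible first | exact hI _ | exact hI' _ | exact hX _ | exact hZ _
    simp [zExponent]

lemma zExponent_syndrome_injective (a a' : Fin 2) (k k' : Fin 5)
    (h : ∀ j, zExponent j k * (a + 1) ≡ zExponent j k' * (a' + 1) [MOD 3]) : a = a' ∧ k = k' := by
  revert a a' k k'
  decide

lemma exists_zExponent_syndrome_ne_zero (a : Fin 2) (k : Fin 5) :
    ∃ j, ¬ zExponent j k * (a + 1) ≡ 0 [MOD 3] := by
  revert a k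
  decide

theorem bit_error_syndromes_distinct :
    ∃ ε : Fin 2 → Fin 5 → Fin 4 → ℂ,
      (∀ a k j, (ε a k j) ^ 3 = 1 ∧ S j * E a k = ε a k j • (E a k * S j)) ∧
      Function.Injective (fun p : Fin 2 × Fin 5 => ε p.1 p.2) ∧
      (∀ a k, ε a k ≠ fun _ => 1) := by
  refine ⟨fun a k j => ω ^ (zExponent j k * (a + 1)),
    fun a k j => ⟨?_, phaseCommute_S_E a k j⟩, ?_, ?_⟩
  · rw [← pow_mul, mul_comm, pow_mul, isPrimitiveRoot_ω.pow_eq_one, one_pow]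
  · rintro ⟨a, k⟩ ⟨a', k'⟩ h
    obtain ⟨rfl, rfl⟩ := zExponent_syndrome_injective a a' k k' fun j =>
      ω_pow_eq_ω_pow_iff.mp (congrFun h j)
    rfl
  · intro a k h
    obtain ⟨j, hj⟩ := exists_zExponent_syndrome_ne_zero a k
    exact hj (ω_pow_eq_ω_pow_iff.mp (by simpa using congrFun h j))
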